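/- arXiv:0910.1473 — 3 statements merged into one kernel-verified Lean document; each statement's English description precedes it below -/
import Mathlib

section
/- Let A be a nonempty bounded open subset of ℝ^d and h > 0. Then the function x ↦ vol(b(x,h) ∩ A), mapping a point to the Lebesgue volume of the intersection of the open ball of radius h around x with A, satisfies inf_{x ∈ A} vol(b(x,h) ∩ A) > 0. -/
/-!
Cover `A` by finitely many balls of radius `r / 2` centred in `A`. Each of them meets `A` in a
nonempty open set, hence in positive measure, and every `x ∈ A` lies in one of them, whose
intersection with `A` is then contained in `ball x r ∩ A`.
-/

open MeasureTheory Metric Set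

theorem TotallyBounded.iInf_measure_ball_inter_pos {X : Type*} [PseudoMetricSpace X]
    [MeasurableSpace X] (μ : Measure X) [μ.IsOpenPosMeasure] {A : Set X} (hA : IsOpen A)
    (hAt : TotallyBounded A) {r : ℝ} (hr : 0 < r) : 0 < ⨅ x : A, μ (ball (x : X) r ∩ A) := by
  obtain ⟨t, htA, htf, hcover⟩ := finite_approx_of_totallyBounded hAt (r / 2) (half_pos hr)
  lift t to Finset X using htf
  have hpos : 0 < t.inf fun y => μ (ball y (r / 2) ∩ A) :=
    (Finset.lt_inf_iff ENNReal.zero_lt_top).2 fun y hy =>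
      (isOpen_ball.inter hA).measure_pos μ ⟨y, mem_ball_self (half_pos hr), htA hy⟩
  refine hpos.trans_le (le_iInf fun x => ?_)
  obtain ⟨y, hy, hxy⟩ := mem_iUnion₂.1 (hcover x.2)
  have hball : ball y (r / 2) ⊆ ball (x : X) r :=
    ball_subset_ball' (by rw [dist_comm]; linarith [mem_ball.1 hxy])
  exact (Finset.inf_le hy).trans (measure_mono (inter_subset_inter_left A hball))

theorem inf_volume_ball_inter_pos_general (d : ℕ)
    (A : Set (EuclideanSpace ℝ (Fin d))) (hA : IsOpen A)
    (hAb : Bornology.IsBounded A) (h : ℝ) (hh : 0 < h) :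
    0 < ⨅ x : A, volume (Metric.ball (x : EuclideanSpace ℝ (Fin d)) h ∩ A) :=
  (hAb.isCompact_closure.totallyBounded.subset subset_closure).iInf_measure_ball_inter_pos
    volume hA hh

/-- For a nonempty bounded open set `A ⊆ ℝ^d` and `h > 0`, the volume of `b(x,h) ∩ A`
is bounded away from zero over `x ∈ A`. -/
theorem inf_volume_ball_inter_pos (d : ℕ)
    (A : Set (EuclideanSpace ℝ (Fin d))) (hA : IsOpen A)
    (hAb : Bornology.IsBounded A) (hAne : A.Nonempty) (h : ℝ) (hh : 0 < h) :
    0 < ⨅ x : A, volume (Metric.ball (x : EuclideanSpace ℝ (Fin d)) h ∩ A) :=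
  inf_volume_ball_inter_pos_general d A hA hAb h hh
end

section
/- For strictly positive constants a and c, ∫_0^c e^{a x} E_1(a x) dx = (γ + log(a c) + e^{a c} E_1(a c)) / a, where γ is the Euler–Mascheroni constant. -/
/-!
With `F y = exp y * E₁ y + log y` one has `F' = exp * E₁`, since `E₁' y = -exp (-y) / y`.
Integrating by parts, `E₁ y + exp (-y) * log y = ∫_y^∞ log t * exp (-t) dt`, so
`F y = exp y * ∫_y^∞ log t * exp (-t) dt` tends to `∫_0^∞ log t * exp (-t) dt = Γ'(1) = -γ`
as `y → 0⁺`. Since `exp * E₁ ≥ 0`, it is integrable near `0`, and the fundamental theorem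
of calculus gives `∫_0^b exp * E₁ = F b + γ`; the substitution `u = a x` finishes the proof.
-/

open MeasureTheory Real Filter Topology

/-- The exponential integral `E₁(x) = ∫_x^∞ e^{-u}/u du`. -/
noncomputable def expInt (x : ℝ) : ℝ := ∫ u in Set.Ioi x, Real.exp (-u) / u

open Set intervalIntegral

theorem continuousOn_exp_neg_div : ContinuousOn (fun u => exp (-u) / u) (Ioi 0) :=
  continuousOn_of_forall_continuousAt fun _ hu => by fun_prop (disch := exact ne_of_gt hu)

theorem integrableOn_exp_neg_div_Ioi {x : ℝ} (hx : 0 < x) :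
    IntegrableOn (fun u => exp (-u) / u) (Ioi x) := by
  refine ((exp_neg_integrableOn_Ioi x one_pos).div_const x).mono' ?_ ?_
  · exact (continuousOn_exp_neg_div.mono (Ioi_subset_Ioi hx.le)).aestronglyMeasurable
      measurableSet_Ioi
  · filter_upwards [ae_restrict_mem measurableSet_Ioi] with u (hu : x < u)
    rw [norm_of_nonneg (by have := hx.trans hu; positivity), neg_one_mul]
    exact div_le_div_of_nonneg_left (exp_pos _).le hx hu.le

theorem expInt_nonneg {x : ℝ} (hx : 0 ≤ x) : 0 ≤ expInt x :=
  setIntegral_nonneg measurableSet_Ioi fun u (hu : x < u) => by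
    have := hx.trans_lt hu; positivity

theorem hasDerivAt_expInt {x : ℝ} (hx : 0 < x) : HasDerivAt expInt (-(exp (-x) / x)) x := by
  have hint := integral_hasDerivAt_left (b := x) IntervalIntegrable.refl
    (continuousOn_exp_neg_div.stronglyMeasurableAtFilter isOpen_Ioi x hx)
    (continuousOn_exp_neg_div.continuousAt (Ioi_mem_nhds hx))
  refine (hint.add_const (expInt x)).congr_of_eventuallyEq ?_
  filter_upwards [Ioi_mem_nhds hx] with y (hy : 0 < y)
  exact (integral_interval_add_Ioi (integrableOn_exp_neg_div_Ioi hy)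
    (integrableOn_exp_neg_div_Ioi hx)).symm

theorem abs_log_le_self_add_two_mul_rpow_neg_half {t : ℝ} (ht : 0 < t) :
    |log t| ≤ t + 2 * t ^ (-(1 / 2) : ℝ) := by
  have hrpow : 0 < t ^ (-(1 / 2) : ℝ) := rpow_pos_of_pos ht _
  rcases le_total 1 t with h1 | h1
  · rw [abs_of_nonneg (log_nonneg h1)]
    linarith [log_le_sub_one_of_pos ht]
  · rw [abs_of_nonpos (log_nonpos ht.le h1), ← log_inv]
    have := log_le_rpow_div (inv_nonneg.2 ht.le) (by norm_num : (0:ℝ) < 1 / 2)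
    rw [inv_rpow ht.le, ← rpow_neg ht.le] at this
    linarith

theorem integrableOn_log_mul_exp_neg : IntegrableOn (fun t => log t * exp (-t)) (Ioi 0) := by
  have hdom := (GammaIntegral_convergent two_pos).add
    ((GammaIntegral_convergent (one_half_pos (α := ℝ))).const_mul 2)
  refine hdom.mono' ?_ ?_
  · exact (continuousOn_of_forall_continuousAt fun t (ht : 0 < t) =>
      by fun_prop (disch := positivity)).aestronglyMeasurable measurableSet_Ioi
  · filter_upwards [ae_restrict_mem measurableSet_Ioi] with t (ht : 0 < t)
    rw [norm_mul, norm_of_nonneg (exp_pos _).le, norm_eq_abs]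
    calc |log t| * exp (-t) ≤ (t + 2 * t ^ (-(1 / 2) : ℝ)) * exp (-t) :=
          mul_le_mul_of_nonneg_right (abs_log_le_self_add_two_mul_rpow_neg_half ht)
            (exp_pos _).le
      _ = exp (-t) * t ^ ((2 : ℝ) - 1) + 2 * (exp (-t) * t ^ ((1 / 2 : ℝ) - 1)) := by
          norm_num
          ring

theorem integral_log_mul_exp_neg :
    ∫ t in Ioi 0, log t * exp (-t) = -eulerMascheroniConstant := by
  have hGamma : HasDerivAt Complex.Gamma
      (∫ t : ℝ in Ioi 0, (t : ℂ) ^ ((1 : ℂ) - 1) * (log t * exp (-t))) 1 := by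
    refine (Complex.hasDerivAt_GammaIntegral (by norm_num)).congr_of_eventuallyEq ?_
    filter_upwards [(Complex.continuous_re.isOpen_preimage _ isOpen_Ioi).mem_nhds
      (by norm_num : (1 : ℂ) ∈ Complex.re ⁻¹' Ioi 0)] with s hs
    exact Complex.Gamma_eq_integral hs
  have := hGamma.unique Complex.hasDerivAt_Gamma_one
  simp only [sub_self, Complex.cpow_zero, one_mul] at this
  rw [← Complex.ofReal_inj, ← integral_complex_ofReal]
  exact_mod_cast this

theorem tendsto_exp_neg_mul_log_atTop : Tendsto (fun t => exp (-t) * log t) atTop (𝓝 0) := by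
  have hlog : (fun t => exp (-t) * log t) =o[atTop] fun t => exp (-t) * t :=
    (Asymptotics.isBigO_refl _ _).mul_isLittleO isLittleO_log_id_atTop
  refine hlog.trans_tendsto ?_
  simpa [mul_comm] using tendsto_pow_mul_exp_neg_atTop_nhds_zero 1

theorem expInt_add_exp_neg_mul_log {y : ℝ} (hy : 0 < y) :
    expInt y + exp (-y) * log y = ∫ t in Ioi y, log t * exp (-t) := by
  have hderiv : ∀ t ∈ Ici y, HasDerivAt (fun t => -(exp (-t) * log t))
      (log t * exp (-t) - exp (-t) / t) t := fun t (ht : y ≤ t) => by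
    have hlog := hasDerivAt_log (hy.trans_le ht).ne'
    refine ((hasDerivAt_neg t).exp.fun_mul hlog).fun_neg.congr_deriv ?_
    field_simp
    ring
  have hint := integrableOn_log_mul_exp_neg.mono_set (Ioi_subset_Ioi hy.le)
  have hint' := integrableOn_exp_neg_div_Ioi hy
  have hibp := integral_Ioi_of_hasDerivAt_of_tendsto' hderiv (hint.sub hint')
    (by simpa using tendsto_exp_neg_mul_log_atTop.neg)
  rw [integral_sub hint hint'] at hibp
  rw [expInt]
  linarith

theorem exp_mul_expInt_add_log {y : ℝ} (hy : 0 < y) :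
    exp y * expInt y + log y = exp y * ∫ t in Ioi y, log t * exp (-t) := by
  rw [← expInt_add_exp_neg_mul_log hy, mul_add, ← mul_assoc, ← exp_add, add_neg_cancel,
    exp_zero, one_mul]

theorem tendsto_setIntegral_Ioi_nhdsGT {E : Type*} [NormedAddCommGroup E] [NormedSpace ℝ E]
    {μ : Measure ℝ} {f : ℝ → E} {a : ℝ} (hf : IntegrableOn f (Ioi a) μ) :
    Tendsto (fun y => ∫ t in Ioi y, f t ∂μ) (𝓝[>] a) (𝓝 (∫ t in Ioi a, f t ∂μ)) := by
  have hcover : AECover (μ.restrict (Ioi a)) (𝓝[>] a) Ioi :=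
    aecover_Ioi_of_Ioi (tendsto_id.mono_left nhdsWithin_le_nhds)
  refine (hcover.integral_tendsto_of_countably_generated hf).congr' ?_
  filter_upwards [self_mem_nhdsWithin] with y (hy : a < y)
  rw [Measure.restrict_restrict measurableSet_Ioi, Ioi_inter_Ioi, max_eq_left hy.le]

theorem tendsto_exp_mul_expInt_add_log :
    Tendsto (fun y => exp y * expInt y + log y) (𝓝[>] 0) (𝓝 (-eulerMascheroniConstant)) := by
  have hexp : Tendsto exp (𝓝[>] 0) (𝓝 1) := by
    simpa using (continuous_exp.tendsto 0).mono_left nhdsWithin_le_nhds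
  have := hexp.mul (tendsto_setIntegral_Ioi_nhdsGT integrableOn_log_mul_exp_neg)
  rw [integral_log_mul_exp_neg, one_mul] at this
  refine this.congr' ?_
  filter_upwards [self_mem_nhdsWithin] with y (hy : 0 < y)
  exact (exp_mul_expInt_add_log hy).symm

theorem hasDerivAt_exp_mul_expInt_add_log {y : ℝ} (hy : 0 < y) :
    HasDerivAt (fun y => exp y * expInt y + log y) (exp y * expInt y) y := by
  have hprod := (hasDerivAt_exp y).mul (hasDerivAt_expInt hy)
  refine (hprod.add (hasDerivAt_log hy.ne')).congr_deriv ?_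
  rw [exp_neg]
  field_simp
  ring

theorem integral_eq_sub_of_hasDerivAt_of_tendsto_of_nonneg {f f' : ℝ → ℝ} {a b fa : ℝ}
    (hab : a < b) (hderiv : ∀ x ∈ Ioc a b, HasDerivAt f (f' x) x)
    (hpos : ∀ x ∈ Ioo a b, 0 ≤ f' x) (ha : Tendsto f (𝓝[>] a) (𝓝 fa)) :
    ∫ x in a..b, f' x = f b - fa := by
  set F := Function.update f a fa
  have hFderiv : ∀ x ∈ Ioo a b, HasDerivAt F (f' x) x := fun x hx =>
    (hderiv x (Ioo_subset_Ioc_self hx)).congr_of_eventuallyEq <| by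
      filter_upwards [Ioi_mem_nhds hx.1] with y hy using Function.update_of_ne hy.ne' _ _
  have hFcont : ContinuousOn F (Icc a b) := by
    rw [continuousOn_update_iff, Icc_sdiff_left]
    exact ⟨fun x hx => (hderiv x hx).continuousAt.continuousWithinAt,
      fun _ => ha.mono_left (nhdsWithin_mono _ Ioc_subset_Ioi_self)⟩
  have hint : IntervalIntegrable f' volume a b := by
    rw [intervalIntegrable_iff_integrableOn_Ioc_of_le hab.le]
    exact integrableOn_deriv_of_nonneg hFcont hFderiv hpos
  simpa [F, hab.ne'] using integral_eq_sub_of_hasDerivAt_of_le hab.le hFcont hFderiv hint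

theorem integral_exp_mul_expInt_of_pos {b : ℝ} (hb : 0 < b) :
    ∫ u in (0 : ℝ)..b, exp u * expInt u =
      eulerMascheroniConstant + log b + exp b * expInt b := by
  rw [integral_eq_sub_of_hasDerivAt_of_tendsto_of_nonneg hb
    (fun y hy => hasDerivAt_exp_mul_expInt_add_log hy.1)
    (fun y hy => mul_nonneg (exp_pos y).le (expInt_nonneg hy.1.le))
    tendsto_exp_mul_expInt_add_log]
  ring

/-- For , ,
where  is the Euler–Mascheroni constant. -/
theorem integral_exp_mul_expInt (a c : ℝ) (ha : 0 < a) (hc : 0 < c) :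
    ∫ x in (0:ℝ)..c, Real.exp (a * x) * expInt (a * x) =
      (Real.eulerMascheroniConstant + Real.log (a * c) +
        Real.exp (a * c) * expInt (a * c)) / a := by
  rw [integral_comp_mul_left (fun u => exp u * expInt u) ha.ne', mul_zero,
    integral_exp_mul_expInt_of_pos (mul_pos ha hc), smul_eq_mul, inv_mul_eq_div]
end

section
/- For λ > 0, ∫_{−∞}^0 ∫_0^∞ λ³ e^{λ t} e^{−λ s} / (s − t) dt ds = λ², where the inner variable t ranges over (−∞, 0) and s over (0, ∞). -/
/-!
Substituting `w = s - t`, the inner integral becomes `∫_{w > s} F w` with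
`F w = λ³ e^{-λw} / w`. Exchanging the order of integration, each `w > 0` is counted with
weight `|(0, w)| = w`, which cancels the singular factor `1 / w` and leaves
`∫_0^∞ λ³ e^{-λw} dw = λ²`.
-/

open MeasureTheory Real Set

section

variable {E : Type*} [NormedAddCommGroup E] [NormedSpace ℝ E]

theorem setIntegral_Iio_zero_comp_sub_left (f : ℝ → E) (s : ℝ) :
    ∫ t in Iio 0, f (s - t) = ∫ w in Ioi s, f w := by
  have hpre : (fun t : ℝ => s - t) ⁻¹' Ioi s = Iio 0 := by ext t; simp
  rw [← (Measure.measurePreserving_sub_left volume s).setIntegral_preimage_emb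
    (MeasurableEquiv.subLeft s).measurableEmbedding f, hpre]

variable [CompleteSpace E]

theorem setIntegral_Ioi_zero_indicator_Iio_const {w : ℝ} (hw : 0 ≤ w) (c : E) :
    ∫ s in Ioi 0, (Iio w).indicator (fun _ => c) s = w • c := by
  rw [integral_indicator measurableSet_Iio, Measure.restrict_restrict measurableSet_Iio,
    Iio_inter_Ioi, setIntegral_const, Real.volume_real_Ioo_of_le hw, sub_zero]

theorem setIntegral_Ioi_setIntegral_Ioi_eq_setIntegral_smul {f : ℝ → E}
    (hf : IntegrableOn (fun w => w • f w) (Ioi 0)) :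
    ∫ s in Ioi 0, ∫ w in Ioi s, f w = ∫ w in Ioi 0, w • f w := by
  set μ := volume.restrict (Ioi (0 : ℝ))
  have hf_meas : AEStronglyMeasurable f μ := by
    refine ((measurable_inv.aestronglyMeasurable (μ := μ)).smul hf.aestronglyMeasurable).congr ?_
    filter_upwards [ae_restrict_mem measurableSet_Ioi] with w (hw : 0 < w)
    simp [inv_smul_smul₀ hw.ne']
  have hslice (s w : ℝ) : (Ioi s).indicator f w = (Iio w).indicator (fun _ => f w) s := by
    by_cases h : s < w <;> simp [h]
  have hinner (s : ℝ) (hs : 0 < s) : ∫ w in Ioi s, f w = ∫ w in Ioi 0, (Ioi s).indicator f w := by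
    rw [integral_indicator measurableSet_Ioi, Measure.restrict_restrict measurableSet_Ioi,
      Ioi_inter_Ioi, sup_eq_left.mpr hs.le]
  have hint : Integrable (Function.uncurry fun s w => (Ioi s).indicator f w) (μ.prod μ) := by
    have hmeas : AEStronglyMeasurable (Function.uncurry fun s w => (Ioi s).indicator f w)
        (μ.prod μ) := by
      have hdiag : (Function.uncurry fun s w => (Ioi s).indicator f w) =
          {p : ℝ × ℝ | p.1 < p.2}.indicator (fun p => f p.2) := by
        ext ⟨s, w⟩
        by_cases h : s < w <;> simp [h]
      rw [hdiag]
      exact hf_meas.comp_snd.indicator (measurableSet_lt measurable_fst measurable_snd)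
    refine (integrable_prod_iff' hmeas).mpr ⟨ae_of_all _ fun w => ?_, hf.norm.congr ?_⟩
    · simp only [Function.uncurry_apply_pair, hslice]
      refine (integrable_indicator_iff measurableSet_Iio).mpr (integrableOn_const ?_)
      rw [Measure.restrict_apply measurableSet_Iio, Iio_inter_Ioi]
      simp
    · filter_upwards [ae_restrict_mem measurableSet_Ioi] with w (hw : 0 < w)
      simp only [Function.uncurry_apply_pair, hslice, norm_indicator_eq_indicator_norm]
      rw [setIntegral_Ioi_zero_indicator_Iio_const hw.le, norm_smul, Real.norm_of_nonneg hw.le,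
        smul_eq_mul]
  calc ∫ s in Ioi 0, ∫ w in Ioi s, f w
      = ∫ s in Ioi 0, ∫ w in Ioi 0, (Ioi s).indicator f w :=
        setIntegral_congr_fun measurableSet_Ioi hinner
    _ = ∫ w in Ioi 0, ∫ s in Ioi 0, (Ioi s).indicator f w := integral_integral_swap hint
    _ = ∫ w in Ioi 0, w • f w := by
        refine setIntegral_congr_fun measurableSet_Ioi fun w (hw : 0 < w) => ?_
        simp only [hslice]
        exact setIntegral_Ioi_zero_indicator_Iio_const hw.le _

end

/-- `∫_0^∞ ∫_{-∞}^0 λ³ e^{λt} e^{-λs} / (s - t) dt ds = λ²`. -/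
theorem double_integral_eq_sq (lam : ℝ) (hlam : 0 < lam) :
    ∫ s in Set.Ioi (0:ℝ), ∫ t in Set.Iio (0:ℝ),
        lam ^ 3 * Real.exp (lam * t) * Real.exp (-(lam * s)) / (s - t) = lam ^ 2 := by
  set F : ℝ → ℝ := fun w => lam ^ 3 * Real.exp (-(lam * w)) / w
  have hwF : EqOn (fun w => w • F w) (fun w => lam ^ 3 * Real.exp (-lam * w)) (Ioi 0) := by
    intro w (hw : 0 < w)
    simp only [F, smul_eq_mul, neg_mul]
    field_simp
  calc ∫ s in Ioi 0, ∫ t in Iio 0, lam ^ 3 * Real.exp (lam * t) * Real.exp (-(lam * s)) / (s - t)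
      = ∫ s in Ioi 0, ∫ t in Iio 0, F (s - t) := by
        congr 1 with s
        congr 1 with t
        simp only [F]
        rw [mul_assoc _ (Real.exp _), ← Real.exp_add]
        ring_nf
    _ = ∫ s in Ioi 0, ∫ w in Ioi s, F w := by simp only [setIntegral_Iio_zero_comp_sub_left]
    _ = ∫ w in Ioi 0, w • F w := setIntegral_Ioi_setIntegral_Ioi_eq_setIntegral_smul <|
        IntegrableOn.congr_fun ((exp_neg_integrableOn_Ioi 0 hlam).const_mul _) hwF.symm
          measurableSet_Ioi
    _ = ∫ w in Ioi 0, lam ^ 3 * Real.exp (-lam * w) := setIntegral_congr_fun measurableSet_Ioi hwF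
    _ = lam ^ 2 := by
        rw [integral_const_mul, integral_exp_mul_Ioi (neg_lt_zero.mpr hlam), mul_zero,
          Real.exp_zero]
        field_simp
end
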